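/- (Abstract robustness of strong stabilizability.) Let R be a commutative integral domain with 1 that is a full subring of a complex commutative unital semisimple Banach algebra S. Let p₀, p be plants in the field of fractions of R admitting coprime factorizations over R, and let c ∈ R be such that g₀ := p₀/(1 - c p₀) ∈ R and c stabilizes p₀. Set k := ‖c‖∞ := sup over characters φ of |φ(c)| and g := ‖g₀‖∞. If the generalized chordal distance κ(p, p₀) < (1/3)·min{1, 1/g, 1/(k(1+kg))}, then p is also stabilized by c (i.e., with coprime factorization p = n/d, the element d - nc is invertible in R). -/

import Mathlib

/-!
If `d - n c` were not a unit of `R`, then, `R` being full in `S`, neither would be its image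
in `S`, so some character `φ` of `S` kills it. Write `v = (φ n, φ d)` and `v₀ = (φ n₀, φ d₀)`.
Lagrange's identity `|⟨v, v₀⟩|² + |det (v, v₀)|² = |v|² |v₀|²` holds in `ℂ²`. On the other
hand `φ d = φ n · φ c` and `φ n₀ = φ g₀ · φ (d₀ - n₀ c)` bound both coordinates of `v₀` by
multiples of `|φ (d₀ - n₀ c)| ≠ 0`, which gives `|⟨v, v₀⟩| ≤ (g + k (1 + k g)) |det (v, v₀)|`.
As `|det (v, v₀)| ≤ κ |v| |v₀|`, the bound on `κ` makes `|⟨v, v₀⟩| < 2/3 |v| |v₀|` and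
`|det (v, v₀)| < 1/3 |v| |v₀|`, contradicting Lagrange's identity.
-/

open WeakDual

/-- The generalized chordal distance between (coprime representatives of) two
plants `p₁ = n₁/d₁`, `p₂ = n₂/d₂` over `R ⊆ S`. -/
noncomputable def genChordal {R S : Type*} [CommRing R]
    [NormedCommRing S] [NormedAlgebra ℂ S] [CompleteSpace S]
    (ι : R →+* S) (n₁ d₁ n₂ d₂ : R) : ℝ :=
  ⨆ φ : characterSpace ℂ S,
    ‖φ (ι n₁) * φ (ι d₂) - φ (ι n₂) * φ (ι d₁)‖ /
      (Real.sqrt (‖φ (ι n₁)‖ ^ 2 + ‖φ (ι d₁)‖ ^ 2) *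
        Real.sqrt (‖φ (ι n₂)‖ ^ 2 + ‖φ (ι d₂)‖ ^ 2))

/-- The supremum norm `‖x‖∞` of `x ∈ R`: the supremum of `|φ(ι x)|` over the
maximal ideal space (character space) of `S`. -/
noncomputable def supNorm {R S : Type*} [CommRing R]
    [NormedCommRing S] [NormedAlgebra ℂ S] [CompleteSpace S]
    (ι : R →+* S) (x : R) : ℝ :=
  ⨆ φ : characterSpace ℂ S, ‖φ (ι x)‖

open ComplexConjugate

/-- The chordal distance between the points `[a : b]` and `[a₀ : b₀]` of the Riemann sphere. -/
noncomputable def chordalDist (a b a₀ b₀ : ℂ) : ℝ :=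
  ‖a * b₀ - a₀ * b‖ / (Real.sqrt (‖a‖ ^ 2 + ‖b‖ ^ 2) * Real.sqrt (‖a₀‖ ^ 2 + ‖b₀‖ ^ 2))

theorem Complex.norm_inner_sq_add_norm_det_sq (a b a₀ b₀ : ℂ) :
    ‖a * conj a₀ + b * conj b₀‖ ^ 2 + ‖a * b₀ - a₀ * b‖ ^ 2 =
      (‖a‖ ^ 2 + ‖b‖ ^ 2) * (‖a₀‖ ^ 2 + ‖b₀‖ ^ 2) := by
  simp only [Complex.sq_norm, Complex.normSq_apply, Complex.add_re, Complex.add_im,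
    Complex.mul_re, Complex.mul_im, Complex.sub_re, Complex.sub_im, Complex.conj_re,
    Complex.conj_im]
  ring

theorem chordalDist_le_one (a b a₀ b₀ : ℂ) : chordalDist a b a₀ b₀ ≤ 1 := by
  have hdet : ‖a * b₀ - a₀ * b‖ ^ 2 ≤ (‖a‖ ^ 2 + ‖b‖ ^ 2) * (‖a₀‖ ^ 2 + ‖b₀‖ ^ 2) := by
    rw [← Complex.norm_inner_sq_add_norm_det_sq]
    exact le_add_of_nonneg_left (sq_nonneg _)
  refine div_le_one_of_le₀ ?_ (by positivity)
  rw [← Real.sqrt_mul (by positivity)]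
  exact Real.le_sqrt_of_sq_le hdet

section CharacterSpace

variable {R S : Type*} [CommRing R] [NormedCommRing S] [NormedAlgebra ℂ S] [CompleteSpace S]
  (ι : R →+* S)

theorem chordalDist_le_genChordal (n₁ d₁ n₂ d₂ : R) (φ : characterSpace ℂ S) :
    chordalDist (φ (ι n₁)) (φ (ι d₁)) (φ (ι n₂)) (φ (ι d₂)) ≤ genChordal ι n₁ d₁ n₂ d₂ :=
  le_ciSup (f := fun ψ : characterSpace ℂ S =>
      chordalDist (ψ (ι n₁)) (ψ (ι d₁)) (ψ (ι n₂)) (ψ (ι d₂)))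
    ⟨1, by rintro _ ⟨ψ, rfl⟩; exact chordalDist_le_one _ _ _ _⟩ φ

theorem norm_apply_le_supNorm (x : R) (φ : characterSpace ℂ S) :
    ‖φ (ι x)‖ ≤ supNorm ι x :=
  le_ciSup (f := fun ψ : characterSpace ℂ S => ‖ψ (ι x)‖)
    ⟨‖ι x‖ * ‖(1 : S)‖, by
      rintro _ ⟨ψ, rfl⟩; exact AlgHom.norm_apply_le_self_mul_norm_one ψ (ι x)⟩ φ

end CharacterSpace

theorem third_min_le_div_of_sq_add_sq_eq {x y z k g : ℝ} (hx : 0 ≤ x) (hy : 0 ≤ y) (hz : 0 < z)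
    (hk : 0 ≤ k) (hg : 0 ≤ g) (hxyz : x ^ 2 + y ^ 2 = z ^ 2)
    (hxy : x ≤ y * (g + k * (1 + k * g))) :
    1 / 3 * min 1 (min (1 / g) (1 / (k * (1 + k * g)))) ≤ y / z := by
  set m := min 1 (min (1 / g) (1 / (k * (1 + k * g))))
  have hmg : m * g ≤ 1 :=
    mul_le_of_le_div₀ zero_le_one hg ((min_le_right _ _).trans (min_le_left _ _))
  have hmk : m * (k * (1 + k * g)) ≤ 1 :=
    mul_le_of_le_div₀ zero_le_one (by positivity) ((min_le_right _ _).trans (min_le_right _ _))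
  by_contra! hlt
  have hy' : y < 1 / 3 * m * z := by rwa [div_lt_iff₀ hz] at hlt
  have hy_third : y < z / 3 := by nlinarith [min_le_left 1 (min (1 / g) (1 / (k * (1 + k * g))))]
  have hx_two_thirds : x ≤ 2 / 3 * z := by
    calc x ≤ y * (g + k * (1 + k * g)) := hxy
      _ ≤ 1 / 3 * m * z * (g + k * (1 + k * g)) := by gcongr
      _ = z / 3 * (m * g + m * (k * (1 + k * g))) := by ring
      _ ≤ z / 3 * 2 := by gcongr; linarith
      _ = 2 / 3 * z := by ring
  nlinarith [mul_le_mul hx_two_thirds hx_two_thirds hx (by positivity),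
    mul_lt_mul'' hy_third hy_third hy hy]

theorem norm_inner_le_norm_det_mul {a b a₀ b₀ γ G : ℂ} {k g : ℝ} (hb : b = a * γ)
    (hG : G * (b₀ - a₀ * γ) = a₀) (hB : b₀ - a₀ * γ ≠ 0) (hγ : ‖γ‖ ≤ k) (hGg : ‖G‖ ≤ g) :
    ‖a * conj a₀ + b * conj b₀‖ ≤ ‖a * b₀ - a₀ * b‖ * (g + k * (1 + k * g)) := by
  set B := b₀ - a₀ * γ
  have hk : 0 ≤ k := (norm_nonneg _).trans hγ
  have ha₀ : ‖a₀‖ ≤ g * ‖B‖ := by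
    rw [← hG, norm_mul]
    gcongr
  have hb₀ : ‖b₀‖ ≤ (1 + k * g) * ‖B‖ :=
    calc ‖b₀‖ = ‖B + a₀ * γ‖ := by rw [sub_add_cancel]
      _ ≤ ‖B‖ + g * ‖B‖ * k := by
        grw [norm_add_le, norm_mul, ha₀, hγ]
        exact (norm_nonneg _).trans ha₀
      _ = (1 + k * g) * ‖B‖ := by ring
  have hfactor : (a * conj a₀ + b * conj b₀) * B = (a * b₀ - a₀ * b) * (conj a₀ + γ * conj b₀) := by
    rw [hb]
    ring
  refine le_of_mul_le_mul_right ?_ (norm_pos_iff.mpr hB)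
  calc ‖a * conj a₀ + b * conj b₀‖ * ‖B‖
      = ‖a * b₀ - a₀ * b‖ * ‖conj a₀ + γ * conj b₀‖ := by rw [← norm_mul, ← norm_mul, hfactor]
    _ ≤ ‖a * b₀ - a₀ * b‖ * (‖a₀‖ + ‖γ‖ * ‖b₀‖) := by
      grw [norm_add_le, norm_mul, RCLike.norm_conj, RCLike.norm_conj]
    _ ≤ ‖a * b₀ - a₀ * b‖ * (g * ‖B‖ + k * ((1 + k * g) * ‖B‖)) := by
      grw [ha₀, hb₀, hγ]
      exact (norm_nonneg _).trans hb₀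
    _ = ‖a * b₀ - a₀ * b‖ * (g + k * (1 + k * g)) * ‖B‖ := by ring

theorem third_min_le_chordalDist {a b a₀ b₀ γ G : ℂ} {k g : ℝ} (ha : a ≠ 0) (hb : b = a * γ)
    (hG : G * (b₀ - a₀ * γ) = a₀) (hB : b₀ - a₀ * γ ≠ 0) (hγ : ‖γ‖ ≤ k) (hGg : ‖G‖ ≤ g) :
    1 / 3 * min 1 (min (1 / g) (1 / (k * (1 + k * g)))) ≤ chordalDist a b a₀ b₀ := by
  have hv : 0 < ‖a‖ ^ 2 + ‖b‖ ^ 2 := by positivity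
  have hv₀ : 0 < ‖a₀‖ ^ 2 + ‖b₀‖ ^ 2 := by
    rcases eq_or_ne a₀ 0 with rfl | ha₀
    · rw [zero_mul, sub_zero] at hB
      positivity
    · positivity
  refine third_min_le_div_of_sq_add_sq_eq (norm_nonneg _) (norm_nonneg _)
    (mul_pos (Real.sqrt_pos.mpr hv) (Real.sqrt_pos.mpr hv₀)) ((norm_nonneg _).trans hγ)
    ((norm_nonneg _).trans hGg) ?_ (norm_inner_le_norm_det_mul hb hG hB hγ hGg)
  rw [mul_pow, Real.sq_sqrt hv.le, Real.sq_sqrt hv₀.le]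
  exact Complex.norm_inner_sq_add_norm_det_sq a b a₀ b₀

theorem third_min_le_chordalDist_of_map_eq_zero {R : Type*} [CommRing R] (ψ : R →+* ℂ)
    {n d n₀ d₀ c g₀ : R} {k g : ℝ} (hcop : ∃ x y : R, n * x + d * y = 1)
    (hstab₀ : IsUnit (d₀ - n₀ * c)) (hg₀ : g₀ * (d₀ - n₀ * c) = n₀) (hψ : ψ (d - n * c) = 0)
    (hk : ‖ψ c‖ ≤ k) (hg : ‖ψ g₀‖ ≤ g) :
    1 / 3 * min 1 (min (1 / g) (1 / (k * (1 + k * g)))) ≤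
      chordalDist (ψ n) (ψ d) (ψ n₀) (ψ d₀) := by
  have hd : ψ d = ψ n * ψ c := by rwa [map_sub, map_mul, sub_eq_zero] at hψ
  obtain ⟨x, y, hxy⟩ := hcop
  have hn : ψ n ≠ 0 := by
    have h := congrArg ψ hxy
    rw [map_add, map_mul, map_mul, map_one, hd] at h
    exact left_ne_zero_of_mul_eq_one (b := ψ x + ψ c * ψ y) (by linear_combination h)
  refine third_min_le_chordalDist hn hd ?_ ?_ hk hg
  · simpa only [map_mul, map_sub] using congrArg ψ hg₀
  · simpa only [map_mul, map_sub] using (hstab₀.map ψ).ne_zero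

theorem robust_strong_stabilization_general {R S : Type*} [CommRing R]
    [NormedCommRing S] [NormedAlgebra ℂ S] [CompleteSpace S]
    (ι : R →+* S)
    (hfull : ∀ x : R, IsUnit (ι x) → IsUnit x)
    (n₀ d₀ n d c g₀ : R)
    (hcop : ∃ x y : R, n * x + d * y = 1)
    (hstab₀ : IsUnit (d₀ - n₀ * c))
    (hg₀ : g₀ * (d₀ - n₀ * c) = n₀)
    (hκ : genChordal ι n d n₀ d₀ <
      1 / 3 * min 1 (min (1 / supNorm ι g₀)
        (1 / (supNorm ι c * (1 + supNorm ι c * supNorm ι g₀))))) :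
    IsUnit (d - n * c) := by
  refine hfull _ (by_contra fun hu => ?_)
  obtain ⟨φ, hφ⟩ := CharacterSpace.exists_apply_eq_zero hu
  have hbound := third_min_le_chordalDist_of_map_eq_zero ((φ : S →+* ℂ).comp ι) hcop hstab₀ hg₀
    hφ (norm_apply_le_supNorm ι c φ) (norm_apply_le_supNorm ι g₀ φ)
  exact (hκ.trans_le (hbound.trans (chordalDist_le_genChordal ι n d n₀ d₀ φ))).false

/-- Abstract robustness of strong stabilizability.  Let `R` be an integral
domain embedded as a full subring of a complex commutative unital semisimple
Banach algebra `S`.  Let `p₀ = n₀/d₀` and `p = n/d` be coprime factorizable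
plants over `R`, and let `c ∈ R` stabilize `p₀`, i.e. `d₀ - n₀c` is invertible
in `R` (equivalently all closed-loop transfer functions lie in `R`), with
closed-loop gain `g₀ = p₀/(1-cp₀) = n₀/(d₀-n₀c) ∈ R`.  Set `k := ‖c‖∞` and
`g := ‖g₀‖∞`.  If `κ(p,p₀) < (1/3)·min{1, 1/g, 1/(k(1+kg))}`, then `p` is
also stabilized by `c`, i.e. `d - nc` is invertible in `R`. -/
theorem robust_strong_stabilization {R S : Type*} [CommRing R] [IsDomain R]
    [NormedCommRing S] [NormedAlgebra ℂ S] [CompleteSpace S]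
    (hsemi : ∀ s : S, (∀ φ : characterSpace ℂ S, φ s = 0) → s = 0)
    (ι : R →+* S) (hinj : Function.Injective ι)
    (hfull : ∀ x : R, IsUnit (ι x) → IsUnit x)
    (n₀ d₀ n d c g₀ : R)
    (hd₀ : d₀ ≠ 0) (hcop₀ : ∃ x y : R, n₀ * x + d₀ * y = 1)
    (hd : d ≠ 0) (hcop : ∃ x y : R, n * x + d * y = 1)
    (hstab₀ : IsUnit (d₀ - n₀ * c))
    (hg₀ : g₀ * (d₀ - n₀ * c) = n₀)
    (hκ : genChordal ι n d n₀ d₀ <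
      1 / 3 * min 1 (min (1 / supNorm ι g₀)
        (1 / (supNorm ι c * (1 + supNorm ι c * supNorm ι g₀))))) :
    IsUnit (d - n * c) :=
  robust_strong_stabilization_general ι hfull n₀ d₀ n d c g₀ hcop hstab₀ hg₀ hκ
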